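/- arXiv:2511.05215 — 3 statements merged into one kernel-verified Lean document; each statement's English description precedes it below -/
import Mathlib

section
/- Fix a real threshold θ > 0, a positive integer L, positive integers K and N, an input activation vector a : Fin K → ℝ, and a weight matrix W : Fin K → Fin N → ℝ. For each output column n, let z_n = ∑_k a_k · W_{k,n} denote the pre-activation inner product, let ANN_n = QCFS_{θ,L}(z_n) denote the ANN realization of column n, and let SNN_n = (θ/L) · ∑_{t=1}^{L} s_t denote the SNN realization of column n, where (s_t) is the spike train of the soft-reset integrate-and-fire neuron with constant input x_t = z_n run for L timesteps. Then for every mode assignment m : Fin N → Bool, the hybrid output defined by (if m n then SNN_n else ANN_n) equals ANN_n for every column n; i.e., the SNN realization of each column is mathematically equivalent to its ANN realization, independently of the per-column mode mask. -/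
/-- QCFS activation: `QCFS_{θ,L}(z) = (θ/L)·clamp(⌊zL/θ + 1/2⌋, 0, L)`. -/
noncomputable def qcfs (θ : ℝ) (L : ℕ) (z : ℝ) : ℝ :=
  (θ / L) * ((min (max ⌊z * L / θ + 1 / 2⌋ 0) (L : ℤ) : ℤ) : ℝ)

/-- Membrane potential of the soft-reset integrate-and-fire neuron: `v 0 = θ/2` and
`v (t+1) = v t + x t - θ·s`, where `x t` is the input at timestep `t+1` and `s` is the spike. -/
noncomputable def ifV (θ : ℝ) (x : ℕ → ℝ) : ℕ → ℝ
  | 0 => θ / 2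
  | t + 1 => ifV θ x t + x t - θ * (if θ ≤ ifV θ x t + x t then 1 else 0)

/-- Spike emitted at timestep `t+1` (0-indexed `t`): `1` if `v t + x t ≥ θ`, else `0`. -/
noncomputable def ifS (θ : ℝ) (x : ℕ → ℝ) (t : ℕ) : ℤ :=
  if θ ≤ ifV θ x t + x t then 1 else 0

lemma vform (θ z : ℝ) (t : ℕ) :
    ifV θ (fun _ => z) t
      = θ/2 + t*z - θ * ((∑ i ∈ Finset.range t, ifS θ (fun _ => z) i : ℤ) : ℝ) := by
  induction t with
  | zero => simp [ifV]
  | succ t ih =>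
      have hs : ((ifS θ (fun _ => z) t : ℤ) : ℝ)
          = if θ ≤ ifV θ (fun _ => z) t + z then 1 else 0 := by
        rw [ifS]; split <;> simp
      rw [Finset.sum_range_succ]
      show ifV θ (fun _ => z) t + z
            - θ * (if θ ≤ ifV θ (fun _ => z) t + z then 1 else 0) = _
      push_cast
      rw [hs, ih]
      split <;> push_cast <;> ring

lemma clamp_rec (c : ℝ) (t : ℕ) :
    min (max ⌊((t:ℝ)+1)*c + 1/2⌋ 0) ((t:ℤ)+1)
      = min (max ⌊(t:ℝ)*c + 1/2⌋ 0) (t:ℤ)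
        + (if min (max ⌊(t:ℝ)*c + 1/2⌋ 0) (t:ℤ) + 1 ≤ ⌊((t:ℝ)+1)*c + 1/2⌋
            then 1 else 0) := by
  set b := ⌊(t:ℝ)*c + 1/2⌋ with hb
  set b' := ⌊((t:ℝ)+1)*c + 1/2⌋ with hb'
  have ht : (0:ℝ) ≤ t := Nat.cast_nonneg t
  rcases le_or_gt 1 c with hc | hc
  · have h1 : (t:ℤ) ≤ b := by rw [hb, Int.le_floor]; push_cast; nlinarith
    have h2 : (t:ℤ) + 1 ≤ b' := by rw [hb', Int.le_floor]; push_cast; nlinarith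
    split <;> omega
  rcases le_or_gt c 0 with hc0 | hc0
  · have h1 : b ≤ 0 := by
      have : b < 1 := by rw [hb, Int.floor_lt]; push_cast; nlinarith
      omega
    have h2 : b' ≤ 0 := by
      have : b' < 1 := by rw [hb', Int.floor_lt]; push_cast; nlinarith
      omega
    split <;> omega
  · have hmono : b ≤ b' := Int.floor_le_floor (by nlinarith)
    have hstep : b' ≤ b + 1 := by
      have h := Int.floor_le_floor
        (show ((t:ℝ)+1)*c + 1/2 ≤ ((t:ℝ)*c + 1/2) + 1 by nlinarith)
      rwa [Int.floor_add_one] at h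
    have hb0 : 0 ≤ b := by rw [hb, Int.le_floor]; push_cast; nlinarith
    have hbt : b ≤ (t:ℤ) := by
      have : b < (t:ℤ) + 1 := by rw [hb, Int.floor_lt]; push_cast; nlinarith
      omega
    split <;> omega

lemma spike_sum (θ : ℝ) (hθ : 0 < θ) (z : ℝ) (t : ℕ) :
    ∑ i ∈ Finset.range t, ifS θ (fun _ => z) i
      = min (max ⌊(t:ℝ)*z/θ + 1/2⌋ 0) (t : ℤ) := by
  induction t with
  | zero => norm_num
  | succ t ih =>
      set S : ℤ := min (max ⌊(t:ℝ)*z/θ + 1/2⌋ 0) (t : ℤ) with hS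
      have hspike : ifS θ (fun _ => z) t
          = if S + 1 ≤ ⌊((t:ℝ)+1)*z/θ + 1/2⌋ then 1 else 0 := by
        have key : (θ ≤ ifV θ (fun _ => z) t + z)
            ↔ ((S:ℝ) + 1 ≤ ((t:ℝ)+1)*z/θ + 1/2) := by
          rw [vform θ z t, ih,
            show ((t:ℝ)+1)*z/θ + 1/2 = (((t:ℝ)+1)*z + θ/2)/θ by
              rw [add_div, div_right_comm, div_self hθ.ne'],
            le_div_iff₀ hθ]
          constructor <;> intro h <;> nlinarith
        have key2 : (θ ≤ ifV θ (fun _ => z) t + z)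
            ↔ (S + 1 ≤ ⌊((t:ℝ)+1)*z/θ + 1/2⌋) := by
          rw [key, Int.le_floor]
          constructor <;> intro h <;> exact_mod_cast h
        rw [ifS]
        simp only [key2]
      rw [Finset.sum_range_succ, ih, hspike]
      have e1 : (t:ℝ)*z/θ = (t:ℝ)*(z/θ) := by ring
      have e2 : ((t+1:ℕ):ℝ)*z/θ + 1/2 = ((t:ℝ)+1)*(z/θ) + 1/2 := by push_cast; ring
      have e3 : ((t:ℝ)+1)*z/θ = ((t:ℝ)+1)*(z/θ) := by ring
      rw [hS, e1, e2, e3, show ((t+1:ℕ):ℤ) = (t:ℤ)+1 by push_cast; ring]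
      exact (clamp_rec (z/θ) t).symm

/-- Column-level ANN–SNN equivalence: for every output column `n`, the SNN realization
(scaled spike count of the soft-reset IF neuron driven by the constant pre-activation
`z n` for `L` timesteps) equals the ANN realization `QCFS_{θ,L}(z n)`, so the hybrid
output is independent of the per-column mode mask `m`. -/
theorem column_hybrid_equiv (θ : ℝ) (hθ : 0 < θ) (L K N : ℕ)
    (hL : 0 < L) (hK : 0 < K) (hN : 0 < N)
    (a : Fin K → ℝ) (W : Fin K → Fin N → ℝ)
    (z ANN SNN : Fin N → ℝ)
    (hz : ∀ n, z n = ∑ k, a k * W k n)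
    (hANN : ∀ n, ANN n = qcfs θ L (z n))
    (hSNN : ∀ n, SNN n =
      (θ / L) * ((∑ t ∈ Finset.range L, ifS θ (fun _ => z n) t : ℤ) : ℝ)) :
    ∀ (m : Fin N → Bool) (n : Fin N), (if m n then SNN n else ANN n) = ANN n := by
  intro m n
  cases hmn : m n with
  | false => simp
  | true =>
      simp only [if_true]
      rw [hSNN, hANN, spike_sum θ hθ, qcfs,
        show (L:ℝ)*(z n)/θ = (z n)*L/θ by ring]
end

section
/- Fix a real threshold θ > 0 and a positive integer L. For every real input z, the soft-reset integrate-and-fire neuron with constant input x_t = z for all t, run for exactly L timesteps, satisfies (θ/L) · ∑_{t=1}^{L} s_t = QCFS_{θ,L}(z); i.e., the spike count scaled by θ/L exactly reproduces the QCFS activation of z. -/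
/-- For constant input `z` over `L` timesteps, the spike count scaled by `θ/L`
exactly reproduces the QCFS activation of `z`. -/
theorem spike_count_eq_qcfs (θ : ℝ) (hθ : 0 < θ) (L : ℕ) (hL : 0 < L) (z : ℝ) :
    (θ / L) * ((∑ t ∈ Finset.range L, ifS θ (fun _ => z) t : ℤ) : ℝ) = qcfs θ L z := by
  set S : ℕ → ℤ := fun t => ∑ i ∈ Finset.range t, ifS θ (fun _ => z) i with hSdef
  set m : ℕ → ℤ := fun t => ⌊(t : ℝ) * (z / θ) + 1 / 2⌋ with hmdef
  -- floor bounds for m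
  have hb : ∀ s : ℕ, (m s : ℝ) ≤ (s : ℝ) * (z / θ) + 1 / 2 ∧
      (s : ℝ) * (z / θ) + 1 / 2 < m s + 1 := fun s =>
    ⟨Int.floor_le _, Int.lt_floor_add_one _⟩
  have hv : ∀ t, ifV θ (fun _ => z) t = θ / 2 + t * z - θ * ((S t : ℤ) : ℝ) := by
    intro t
    induction t with
    | zero => simp [ifV, hSdef]
    | succ t ih =>
      have hS : S (t + 1) = S t + ifS θ (fun _ => z) t := by
        simp [hSdef, Finset.sum_range_succ]
      show ifV θ (fun _ => z) t + z - θ * (if θ ≤ ifV θ (fun _ => z) t + z then 1 else 0) = _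
      rw [hS]
      unfold ifS
      rw [ih]
      split <;> push_cast <;> ring
  have hspike : ∀ t, ifS θ (fun _ => z) t = if S t + 1 ≤ m (t + 1) then 1 else 0 := by
    intro t
    unfold ifS
    rw [hv t]
    congr 1
    simp only [eq_iff_iff, hmdef, Int.le_floor]
    push_cast
    have hcancel : ((t : ℝ) + 1) * (z / θ) * θ = ((t : ℝ) + 1) * z := by
      field_simp
    constructor
    · intro h
      have h' : ((S t : ℝ) + 1 / 2) * θ ≤ ((t : ℝ) + 1) * (z / θ) * θ := by
        rw [hcancel]; nlinarith
      have := le_of_mul_le_mul_right h' hθ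
      linarith
    · intro h
      have h' : ((S t : ℝ) + 1 / 2) * θ ≤ ((t : ℝ) + 1) * (z / θ) * θ := by
        apply mul_le_mul_of_nonneg_right _ (le_of_lt hθ)
        linarith
      rw [hcancel] at h'
      nlinarith
  have ha1 : ∀ t : ℕ, m t + 2 ≤ m (t + 1) → ((t : ℤ) ≤ m t ∧ (t : ℤ) + 1 ≤ m (t + 1)) := by
    intro t h
    obtain ⟨h1, h2⟩ := hb t
    obtain ⟨h3, h4⟩ := hb (t + 1)
    push_cast at h3 h4
    have hr : (m t : ℝ) + 2 ≤ m (t + 1) := by exact_mod_cast h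
    have ha : 1 < z / θ := by nlinarith
    have key : ∀ s : ℕ, (s : ℤ) ≤ m s := by
      intro s
      simp only [hmdef, Int.le_floor]
      push_cast
      nlinarith [Nat.cast_nonneg (α := ℝ) s]
    constructor
    · exact key t
    · have := key (t + 1); push_cast at this; exact_mod_cast this
  have ha2 : ∀ t : ℕ, m (t + 1) ≤ m t - 1 → (m t ≤ 0 ∧ m (t + 1) ≤ 0) := by
    intro t h
    obtain ⟨h1, h2⟩ := hb t
    obtain ⟨h3, h4⟩ := hb (t + 1)
    push_cast at h3 h4
    have hr : (m (t + 1) : ℝ) ≤ m t - 1 := by exact_mod_cast h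
    have ha : z / θ < 0 := by nlinarith
    have key : ∀ s : ℕ, m s ≤ 0 := by
      intro s
      have hm : (s : ℝ) * (z / θ) + 1 / 2 < ((1 : ℤ) : ℝ) := by
        push_cast
        nlinarith [Nat.cast_nonneg (α := ℝ) s,
          mul_nonpos_of_nonneg_of_nonpos (Nat.cast_nonneg (α := ℝ) s) (le_of_lt ha)]
      have := Int.floor_lt.2 hm
      simp only [hmdef]
      omega
    exact ⟨key t, key (t + 1)⟩
  have hmain : ∀ t : ℕ, S t = min (max (m t) 0) (t : ℤ) := by
    intro t
    induction t with
    | zero =>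
      have hm0 : m 0 = 0 := by
        simp only [hmdef]
        norm_num
      simp [hSdef, hm0]
    | succ t ih =>
      have hS : S (t + 1) = S t + ifS θ (fun _ => z) t := by
        simp [hSdef, Finset.sum_range_succ]
      rw [hS, hspike t, ih]
      have h1 := ha1 t
      have h2 := ha2 t
      push_cast
      split <;> omega
  have hL' : m L = ⌊z * L / θ + 1 / 2⌋ := by
    simp only [hmdef]
    congr 1
    ring_nf
  rw [qcfs, ← hL']
  show θ / L * ((S L : ℤ) : ℝ) = _
  rw [hmain L]
end

section
/- Fix a real threshold θ > 0, a positive integer T, and a real input z with 0 ≤ z ≤ θ. For the soft-reset integrate-and-fire neuron with constant input x_t = z, the membrane potential satisfies 0 ≤ v_t < θ for every t ≥ 0, and the total spike count over T timesteps is exactly ∑_{t=1}^{T} s_t = ⌊Tz/θ + 1/2⌋ (no clipping is needed). -/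
/-- For constant input `z` with `0 ≤ z ≤ θ`, the membrane potential stays in `[0, θ)`
for every `t ≥ 0`, and the total spike count over `T` timesteps is exactly
`⌊Tz/θ + 1/2⌋` (no clipping needed). -/
theorem membrane_bounded_and_spike_count (θ : ℝ) (hθ : 0 < θ) (T : ℕ) (hT : 0 < T)
    (z : ℝ) (hz0 : 0 ≤ z) (hzθ : z ≤ θ) :
    (∀ t : ℕ, 0 ≤ ifV θ (fun _ => z) t ∧ ifV θ (fun _ => z) t < θ) ∧
    ∑ t ∈ Finset.range T, ifS θ (fun _ => z) t = ⌊(T : ℝ) * z / θ + 1 / 2⌋ := by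
  set x : ℕ → ℝ := fun _ => z with hx
  have key : ∀ t : ℕ, (0 ≤ ifV θ x t ∧ ifV θ x t < θ) ∧
      ifV θ x t = θ/2 + t*z - θ * (∑ i ∈ Finset.range t, ifS θ x i) := by
    intro t
    induction t with
    | zero => exact ⟨⟨by simp [ifV]; linarith, by simp [ifV]; linarith⟩, by simp [ifV]⟩
    | succ n ih =>
      obtain ⟨⟨h0, h1⟩, heq⟩ := ih
      have hxn : x n = z := rfl
      by_cases h : θ ≤ ifV θ x n + x n
      · have hv : ifV θ x (n+1) = ifV θ x n + z - θ := by
          simp [ifV, h, hxn]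
          intro h2; exfalso; rw [hxn] at h; linarith
        have hs : ifS θ x n = 1 := by simp [ifS, h]
        refine ⟨⟨by rw [hv]; linarith [h, hxn ▸ h], by rw [hv]; linarith⟩, ?_⟩
        rw [hv, Finset.sum_range_succ, hs, heq]
        push_cast
        ring
      · have hv : ifV θ x (n+1) = ifV θ x n + z := by
          simp [ifV, h, hxn]
          intro h2; exfalso; rw [hxn] at h; exact h h2
        have hs : ifS θ x n = 0 := by simp [ifS, h]
        have h' : ifV θ x n + z < θ := by
          have := not_le.mp h; rwa [hxn] at this
        refine ⟨⟨by rw [hv]; linarith, by rw [hv]; linarith⟩, ?_⟩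
        rw [hv, Finset.sum_range_succ, hs, heq]
        push_cast
        ring
  refine ⟨fun t => (key t).1, ?_⟩
  obtain ⟨⟨h0, h1⟩, heq⟩ := key T
  set S : ℤ := ∑ i ∈ Finset.range T, ifS θ x i with hS
  symm
  rw [Int.floor_eq_iff]
  have hrw : (T:ℝ) * z / θ + 1 / 2 = ((T:ℝ) * z + θ/2) / θ := by
    field_simp
  rw [heq] at h0 h1
  rw [hrw]
  constructor
  · rw [le_div_iff₀ hθ]; nlinarith
  · rw [div_lt_iff₀ hθ]; nlinarith
end
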